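/- (Rosenfeld–Hales inequality) For every pair of finite simple graphs G and H, α(G ⊠ H) ≤ α*(G) · α(H). -/

import Mathlib

open Finset

namespace SimpleGraph

variable {V W : Type*}

/-- The strong graph product. -/
def strongProd (G : SimpleGraph V) (H : SimpleGraph W) : SimpleGraph (V × W) where
  Adj x y := x ≠ y ∧ (x.1 = y.1 ∨ G.Adj x.1 y.1) ∧ (x.2 = y.2 ∨ H.Adj x.2 y.2)
  symm := by
    constructor
    rintro x y ⟨hne, h1, h2⟩
    exact ⟨hne.symm, h1.imp Eq.symm (fun h => G.adj_symm h), h2.imp Eq.symm (fun h => H.adj_symm h)⟩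
  loopless := by constructor; rintro x ⟨hne, -, -⟩; exact hne rfl

/-- The disjunctive graph product. -/
def disjProd (G : SimpleGraph V) (H : SimpleGraph W) : SimpleGraph (V × W) where
  Adj x y := G.Adj x.1 y.1 ∨ H.Adj x.2 y.2
  symm := ⟨fun _ _ h => h.imp (fun h => G.adj_symm h) (fun h => H.adj_symm h)⟩
  loopless := ⟨fun x h => h.elim (fun h => G.irrefl h) (fun h => H.irrefl h)⟩

/-- A finite set of vertices is independent if no two of its members are adjacent. -/
def IsIndep (G : SimpleGraph V) (s : Finset V) : Prop :=
  ∀ ⦃v⦄, v ∈ s → ∀ ⦃w⦄, w ∈ s → ¬ G.Adj v w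

/-- The independence number. -/
noncomputable def alpha (G : SimpleGraph V) [Fintype V] : ℕ :=
  sSup {n | ∃ s : Finset V, G.IsIndep s ∧ s.card = n}

/-- The fractional packing number. -/
noncomputable def alphaStar (G : SimpleGraph V) [Fintype V] : ℝ :=
  sSup {x | ∃ t : V → ℝ, (∀ v, 0 ≤ t v) ∧
    (∀ C : Finset V, G.IsClique (C : Set V) → ∑ v ∈ C, t v ≤ 1) ∧ x = ∑ v, t v}

/-- The Lovász number. -/
noncomputable def lovTheta (G : SimpleGraph V) [Fintype V] : ℝ :=
  sSup {x | ∃ B : Matrix V V ℝ, B.PosSemidef ∧ B.trace = 1 ∧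
    (∀ v w, G.Adj v w → B v w = 0) ∧ x = ∑ v, ∑ w, B v w}

/-- Schrijver's variant of the Lovász number. -/
noncomputable def thetaMinus (G : SimpleGraph V) [Fintype V] : ℝ :=
  sSup {x | ∃ B : Matrix V V ℝ, B.PosSemidef ∧ B.trace = 1 ∧ (∀ v w, 0 ≤ B v w) ∧
    (∀ v w, G.Adj v w → B v w = 0) ∧ x = ∑ v, ∑ w, B v w}

/-- Szegedy's variant of the Lovász number. -/
noncomputable def thetaPlus (G : SimpleGraph V) [Fintype V] : ℝ :=
  sSup {x | ∃ B : Matrix V V ℝ, B.PosSemidef ∧ B.trace = 1 ∧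
    (∀ v w, G.Adj v w → B v w ≤ 0) ∧ x = ∑ v, ∑ w, B v w}

/-- The clique covering number. -/
noncomputable def cliqueCoverNum (G : SimpleGraph V) [Fintype V] : ℕ :=
  sInf {n | ∃ C : Fin n → Finset V, (∀ i, G.IsClique (C i : Set V)) ∧ ∀ v, ∃ i, v ∈ C i}

/-- The blow-up of a graph along integer vertex weights. -/
def blup (G : SimpleGraph V) (p : V → ℕ) : SimpleGraph (Σ v, Fin (p v)) where
  Adj x y := G.Adj x.1 y.1
  symm := ⟨fun _ _ h => G.adj_symm h⟩
  loopless := ⟨fun x h => G.irrefl h⟩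

/-- The weighted independence number (integer weights). -/
noncomputable def alphaWNat (G : SimpleGraph V) [Fintype V] (p : V → ℕ) : ℕ :=
  sSup {n | ∃ s : Finset V, G.IsIndep s ∧ n = ∑ v ∈ s, p v}

/-- The weighted independence number (real weights). -/
noncomputable def alphaW (G : SimpleGraph V) [Fintype V] (p : V → ℝ) : ℝ :=
  sSup {x | ∃ s : Finset V, G.IsIndep s ∧ x = ∑ v ∈ s, p v}

end SimpleGraph

open SimpleGraph
open scoped RealInnerProductSpace

/-! Let `S` be a maximum independent set of `G ⊠ H` and count its points in each row,
`t v = #{w | (v, w) ∈ S}`. Two distinct points of `S` lying in rows of a clique `C` of `G` agree or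
are adjacent in the first coordinate, so their second coordinates must be distinct and
nonadjacent: the points of `S` over `C` project injectively onto an independent set of `H`.
Hence `t / α(H)` is a fractional packing of `G`, of total weight `α(G ⊠ H) / α(H)`. -/

namespace SimpleGraph

variable {V W : Type*}

section Alpha

variable [Fintype V] (G : SimpleGraph V)

lemma bddAbove_indep_cards :
    BddAbove {n | ∃ s : Finset V, G.IsIndep s ∧ s.card = n} := by
  refine ⟨Fintype.card V, ?_⟩
  rintro n ⟨s, -, rfl⟩
  exact s.card_le_univ

lemma IsIndep.card_le_alpha {G : SimpleGraph V} {s : Finset V} (hs : G.IsIndep s) :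
    s.card ≤ G.alpha :=
  le_csSup (bddAbove_indep_cards G) ⟨s, hs, rfl⟩

lemma exists_isIndep_card_eq_alpha : ∃ s : Finset V, G.IsIndep s ∧ s.card = G.alpha := by
  have h : G.alpha ∈ {n | ∃ s : Finset V, G.IsIndep s ∧ s.card = n} :=
    Nat.sSup_mem ⟨0, ∅, by simp [IsIndep], rfl⟩ (bddAbove_indep_cards G)
  exact h

end Alpha

section AlphaStar

variable [Fintype V] (G : SimpleGraph V)

lemma bddAbove_fractionalPackings :
    BddAbove {x | ∃ t : V → ℝ, (∀ v, 0 ≤ t v) ∧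
      (∀ C : Finset V, G.IsClique (C : Set V) → ∑ v ∈ C, t v ≤ 1) ∧ x = ∑ v, t v} := by
  refine ⟨Fintype.card V, ?_⟩
  rintro x ⟨t, -, htC, rfl⟩
  have ht_le_one (v : V) : t v ≤ 1 := by
    simpa using htC {v} (by simp)
  calc ∑ v, t v ≤ ∑ _v : V, (1 : ℝ) := Finset.sum_le_sum fun v _ => ht_le_one v
    _ = Fintype.card V := by simp

lemma sum_le_alphaStar {t : V → ℝ} (ht0 : ∀ v, 0 ≤ t v)
    (htC : ∀ C : Finset V, G.IsClique (C : Set V) → ∑ v ∈ C, t v ≤ 1) :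
    ∑ v, t v ≤ G.alphaStar :=
  le_csSup (bddAbove_fractionalPackings G) ⟨t, ht0, htC, rfl⟩

lemma sum_le_alphaStar_mul {t : V → ℝ} {c : ℝ} (ht0 : ∀ v, 0 ≤ t v)
    (htC : ∀ C : Finset V, G.IsClique (C : Set V) → ∑ v ∈ C, t v ≤ c) :
    ∑ v, t v ≤ G.alphaStar * c := by
  rcases le_or_gt c 0 with hc | hc
  · have ht_zero (v : V) : t v = 0 := by
      have htv : t v ≤ c := by simpa using htC {v} (by simp)
      exact le_antisymm (htv.trans hc) (ht0 v)
    have hc0 : c = 0 := le_antisymm hc (by simpa [ht_zero] using htC ∅ (by simp))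
    simp [ht_zero, hc0]
  · have h := G.sum_le_alphaStar (t := fun v => t v / c) (fun v => div_nonneg (ht0 v) hc.le)
      (fun C hC => by rw [← Finset.sum_div, div_le_one hc]; exact htC C hC)
    rwa [← Finset.sum_div, div_le_iff₀ hc] at h

end AlphaStar

lemma IsIndep.snd_ne_and_not_adj_of_isClique {G : SimpleGraph V} {H : SimpleGraph W}
    {S : Finset (V × W)} (hS : (G.strongProd H).IsIndep S) {C : Set V} (hC : G.IsClique C)
    {p q : V × W} (hp : p ∈ S) (hq : q ∈ S) (hpC : p.1 ∈ C) (hqC : q.1 ∈ C) (hpq : p ≠ q) :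
    ¬(p.2 = q.2 ∨ H.Adj p.2 q.2) := fun h₂ =>
  hS hp hq ⟨hpq, (eq_or_ne p.1 q.1).imp_right (hC hpC hqC), h₂⟩

lemma IsIndep.card_filter_fst_mem_le_alpha [DecidableEq V] [Fintype W] {G : SimpleGraph V}
    {H : SimpleGraph W} {S : Finset (V × W)} (hS : (G.strongProd H).IsIndep S) {C : Finset V}
    (hC : G.IsClique (C : Set V)) : (S.filter (·.1 ∈ C)).card ≤ H.alpha := by
  classical
  set T := S.filter (·.1 ∈ C)
  have hsep {p q : V × W} (hp : p ∈ T) (hq : q ∈ T) (hpq : p ≠ q) :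
      ¬(p.2 = q.2 ∨ H.Adj p.2 q.2) := by
    rw [Finset.mem_filter] at hp hq
    exact hS.snd_ne_and_not_adj_of_isClique hC hp.1 hq.1 hp.2 hq.2 hpq
  have hinj : Set.InjOn Prod.snd (T : Set (V × W)) := fun p hp q hq h₂ => by
    by_contra hpq
    exact hsep hp hq hpq (Or.inl h₂)
  have hindep : H.IsIndep (T.image Prod.snd) := by
    simp only [IsIndep, Finset.mem_image]
    rintro _ ⟨p, hp, rfl⟩ _ ⟨q, hq, rfl⟩ hadj
    exact hsep hp hq (by rintro rfl; exact H.irrefl hadj) (Or.inr hadj)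
  rw [← Finset.card_image_of_injOn hinj]
  exact hindep.card_le_alpha

end SimpleGraph

theorem rosenfeld_hales {V W : Type*} [Fintype V] [Fintype W]
    (G : SimpleGraph V) (H : SimpleGraph W) :
    ((G.strongProd H).alpha : ℝ) ≤ G.alphaStar * (H.alpha : ℝ) := by
  classical
  obtain ⟨S, hS, hScard⟩ := (G.strongProd H).exists_isIndep_card_eq_alpha
  set t : V → ℝ := fun v => ((S.filter (·.1 = v)).card : ℝ)
  have hclique (C : Finset V) (hC : G.IsClique (C : Set V)) : ∑ v ∈ C, t v ≤ H.alpha := by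
    have h := hS.card_filter_fst_mem_le_alpha hC
    rw [← Finset.sum_card_fiberwise_eq_card_filter] at h
    simpa [t] using (Nat.cast_le (α := ℝ)).2 h
  have htotal : ∑ v, t v = S.card := by
    rw [Finset.card_eq_sum_card_fiberwise (f := Prod.fst) (t := Finset.univ)
      (fun p _ => Finset.mem_univ _)]
    push_cast
    rfl
  rw [← hScard, ← htotal]
  exact G.sum_le_alphaStar_mul (fun v => Nat.cast_nonneg _) hclique
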